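/- Consider the almost paracontact metric Walker structure on ℝ³ with ξ₂ ≡ 1, ξ₃ ≡ 0 and an arbitrary smooth function ξ₁ : ℝ³ → ℝ (so ξ = ξ₁∂x + ∂y, η = dy + ξ₁ dz, φ∂x = −∂x, φ∂y = ξ₁∂x, φ∂z = −f∂x − ξ₁∂y + ∂z). Then the structure lies strictly in the basic class G₁₂ — i.e. F is nonzero at every point and F(X,Y,Z) = η(X)(η(Y)F(ξ,ξ,Z) − η(Z)F(ξ,ξ,Y)) for all vector fields X,Y,Z — if and only if (ξ₁)_x ≡ 0, (ξ₁)_y vanishes nowhere, and 2ξ₁(ξ₁)_y − 2(ξ₁)_z − ξ₁ f_x − f_y ≡ 0 on ℝ³ (Theorem 4.4(v)). -/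

import Mathlib

open Real

/-- Points of the Walker manifold `M = ℝ³` with coordinates `(x,y,z)`. -/
abbrev Pt : Type := ℝ × ℝ × ℝ

/-- Vector fields on `ℝ³`, given by their components in the frame `∂x, ∂y, ∂z`. -/
abbrev VF : Type := Pt → Pt

/-- Partial derivative ∂/∂x. -/
noncomputable def pdx (F : Pt → ℝ) (p : Pt) : ℝ := fderiv ℝ F p ((1:ℝ), (0:ℝ), (0:ℝ))

/-- Partial derivative ∂/∂y. -/
noncomputable def pdy (F : Pt → ℝ) (p : Pt) : ℝ := fderiv ℝ F p ((0:ℝ), (1:ℝ), (0:ℝ))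

/-- Partial derivative ∂/∂z. -/
noncomputable def pdz (F : Pt → ℝ) (p : Pt) : ℝ := fderiv ℝ F p ((0:ℝ), (0:ℝ), (1:ℝ))

/-- Directional derivative of a scalar function along a vector field. -/
noncomputable def dd (X : VF) (F : Pt → ℝ) (p : Pt) : ℝ := fderiv ℝ F p (X p)

/-- Components of a tangent vector. -/
def c1 (v : Pt) : ℝ := v.1
def c2 (v : Pt) : ℝ := v.2.1
def c3 (v : Pt) : ℝ := v.2.2

/-- The coordinate vector fields `∂x, ∂y, ∂z`. -/
noncomputable def E : Fin 3 → VF :=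
  ![fun _ => ((1:ℝ), (0:ℝ), (0:ℝ)), fun _ => ((0:ℝ), (1:ℝ), (0:ℝ)),
    fun _ => ((0:ℝ), (0:ℝ), (1:ℝ))]

/-- The Walker metric with `ε = 1`: `g(∂x,∂z) = g(∂z,∂x) = 1`, `g(∂y,∂y) = 1`,
`g(∂z,∂z) = f`, all other components zero. -/
noncomputable def gm (f : Pt → ℝ) (X Y : VF) (p : Pt) : ℝ :=
  c1 (X p) * c3 (Y p) + c3 (X p) * c1 (Y p) + c2 (X p) * c2 (Y p)
    + f p * c3 (X p) * c3 (Y p)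

/-- The Levi-Civita connection of the Walker metric:
`∇_{∂x}∂z = ∇_{∂z}∂x = (1/2) f_x ∂x`, `∇_{∂y}∂z = ∇_{∂z}∂y = (1/2) f_y ∂x`,
`∇_{∂z}∂z = (1/2)(f f_x + f_z) ∂x - (1/2) f_y ∂y - (1/2) f_x ∂z`, all other covariant
derivatives of coordinate fields zero, extended by `C^∞`-linearity below and the
Leibniz rule above. -/
noncomputable def cov (f : Pt → ℝ) (X Y : VF) : VF := fun p =>
  ( dd X (fun q => c1 (Y q)) p
      + (1/2) * pdx f p * (c1 (X p) * c3 (Y p) + c3 (X p) * c1 (Y p))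
      + (1/2) * pdy f p * (c2 (X p) * c3 (Y p) + c3 (X p) * c2 (Y p))
      + (1/2) * (f p * pdx f p + pdz f p) * (c3 (X p) * c3 (Y p)),
    dd X (fun q => c2 (Y q)) p - (1/2) * pdy f p * (c3 (X p) * c3 (Y p)),
    dd X (fun q => c3 (Y q)) p - (1/2) * pdx f p * (c3 (X p) * c3 (Y p)) )

/-- Lie bracket of vector fields on `ℝ³`. -/
noncomputable def brk (X Y : VF) : VF := fun p =>
  ( dd X (fun q => c1 (Y q)) p - dd Y (fun q => c1 (X q)) p,
    dd X (fun q => c2 (Y q)) p - dd Y (fun q => c2 (X q)) p,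
    dd X (fun q => c3 (Y q)) p - dd Y (fun q => c3 (X q)) p )

/-- The `(1,1)`-tensor `φ` of the almost paracontact metric Walker structure:
`φ∂x = -ξ₂∂x + ξ₃∂y`, `φ∂y = (ξ₁ + fξ₃)∂x - ξ₃∂z`, `φ∂z = -fξ₂∂x - ξ₁∂y + ξ₂∂z`. -/
noncomputable def phiV (f ξ₁ ξ₂ ξ₃ : Pt → ℝ) (X : VF) : VF := fun p =>
  ( -ξ₂ p * c1 (X p) + (ξ₁ p + f p * ξ₃ p) * c2 (X p) - f p * ξ₂ p * c3 (X p),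
    ξ₃ p * c1 (X p) - ξ₁ p * c3 (X p),
    -ξ₃ p * c2 (X p) + ξ₂ p * c3 (X p) )

/-- The 1-form `η = ξ₃ dx + ξ₂ dy + (ξ₁ + fξ₃) dz`. -/
noncomputable def etaV (f ξ₁ ξ₂ ξ₃ : Pt → ℝ) (X : VF) (p : Pt) : ℝ :=
  ξ₃ p * c1 (X p) + ξ₂ p * c2 (X p) + (ξ₁ p + f p * ξ₃ p) * c3 (X p)

/-- The structure tensor `F(X,Y,Z) = g((∇_X φ)Y, Z)`, `(∇_X φ)Y = ∇_X(φY) - φ(∇_X Y)`. -/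
noncomputable def Ften (f ξ₁ ξ₂ ξ₃ : Pt → ℝ) (X Y Z : VF) (p : Pt) : ℝ :=
  gm f (fun q => cov f X (phiV f ξ₁ ξ₂ ξ₃ Y) q - phiV f ξ₁ ξ₂ ξ₃ (cov f X Y) q) Z p

/-- The fundamental 2-form `Φ(X,Y) = g(φX, Y)`. -/
noncomputable def Phi2 (f ξ₁ ξ₂ ξ₃ : Pt → ℝ) (X Y : VF) : Pt → ℝ :=
  gm f (phiV f ξ₁ ξ₂ ξ₃ X) Y

/-- `dη(∂i,∂j) = (1/2)(∂i(η(∂j)) - ∂j(η(∂i)))` on coordinate fields. -/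
noncomputable def deta (f ξ₁ ξ₂ ξ₃ : Pt → ℝ) (i j : Fin 3) (p : Pt) : ℝ :=
  (1/2) * (dd (E i) (etaV f ξ₁ ξ₂ ξ₃ (E j)) p - dd (E j) (etaV f ξ₁ ξ₂ ξ₃ (E i)) p)

/-- `dη(X,Y) = (1/2)(X(η(Y)) - Y(η(X)) - η([X,Y]))` on general vector fields. -/
noncomputable def detaB (f ξ₁ ξ₂ ξ₃ : Pt → ℝ) (X Y : VF) (p : Pt) : ℝ :=
  (1/2) * (dd X (etaV f ξ₁ ξ₂ ξ₃ Y) p - dd Y (etaV f ξ₁ ξ₂ ξ₃ X) p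
    - etaV f ξ₁ ξ₂ ξ₃ (brk X Y) p)

/-- The Nijenhuis tensor `N(X,Y) = φ²[X,Y] + [φX,φY] - φ[φX,Y] - φ[X,φY]`. -/
noncomputable def nij (f ξ₁ ξ₂ ξ₃ : Pt → ℝ) (X Y : VF) : VF := fun p =>
  phiV f ξ₁ ξ₂ ξ₃ (phiV f ξ₁ ξ₂ ξ₃ (brk X Y)) p
    + brk (phiV f ξ₁ ξ₂ ξ₃ X) (phiV f ξ₁ ξ₂ ξ₃ Y) p
    - phiV f ξ₁ ξ₂ ξ₃ (brk (phiV f ξ₁ ξ₂ ξ₃ X) Y) p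
    - phiV f ξ₁ ξ₂ ξ₃ (brk X (phiV f ξ₁ ξ₂ ξ₃ Y)) p

/-- The curvature tensor, with the paper's sign convention
`R(X,Y)Z = ∇_{[X,Y]}Z - ∇_X∇_Y Z + ∇_Y∇_X Z`. -/
noncomputable def Rop (f : Pt → ℝ) (X Y Z : VF) : VF := fun p =>
  cov f (brk X Y) Z p - cov f X (cov f Y Z) p + cov f Y (cov f X Z) p

/-- Second partial derivatives of `f`. -/
noncomputable def fxx (f : Pt → ℝ) : Pt → ℝ := pdx (pdx f)
noncomputable def fxy (f : Pt → ℝ) : Pt → ℝ := pdy (pdx f)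
noncomputable def fyy (f : Pt → ℝ) : Pt → ℝ := pdy (pdy f)

/-- The Ricci tensor of the Walker metric: `ρ(∂x,∂z) = ρ(∂z,∂x) = (1/2) f_xx`,
`ρ(∂y,∂z) = ρ(∂z,∂y) = (1/2) f_xy`, `ρ(∂z,∂z) = (1/2)(f f_xx - f_yy)`, all other
components zero, extended tensorially. -/
noncomputable def rhoT (f : Pt → ℝ) (X Y : VF) (p : Pt) : ℝ :=
  (1/2) * fxx f p * (c1 (X p) * c3 (Y p) + c3 (X p) * c1 (Y p))
    + (1/2) * fxy f p * (c2 (X p) * c3 (Y p) + c3 (X p) * c2 (Y p))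
    + (1/2) * (f p * fxx f p - fyy f p) * (c3 (X p) * c3 (Y p))

/-- The Ricci operator: `Q∂x = (1/2)f_xx ∂x`, `Q∂y = (1/2)f_xy ∂x`,
`Q∂z = -(1/2)f_yy ∂x + (1/2)f_xy ∂y + (1/2)f_xx ∂z`. -/
noncomputable def Qop (f : Pt → ℝ) (X : VF) : VF := fun p =>
  ( (1/2) * fxx f p * c1 (X p) + (1/2) * fxy f p * c2 (X p) - (1/2) * fyy f p * c3 (X p),
    (1/2) * fxy f p * c3 (X p),
    (1/2) * fxx f p * c3 (X p) )

/-- `dΦ(∂x,∂y,∂z) = ∂x(Φ(∂y,∂z)) - ∂y(Φ(∂x,∂z)) + ∂z(Φ(∂x,∂y))`. -/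
noncomputable def dPhi (f ξ₁ ξ₂ ξ₃ : Pt → ℝ) (p : Pt) : ℝ :=
  pdx (Phi2 f ξ₁ ξ₂ ξ₃ (E 1) (E 2)) p - pdy (Phi2 f ξ₁ ξ₂ ξ₃ (E 0) (E 2)) p
    + pdz (Phi2 f ξ₁ ξ₂ ξ₃ (E 0) (E 1)) p

/-- `(η∧Φ)(∂x,∂y,∂z) = η(∂x)Φ(∂y,∂z) - η(∂y)Φ(∂x,∂z) + η(∂z)Φ(∂x,∂y)`. -/
noncomputable def etaWedgePhi (f ξ₁ ξ₂ ξ₃ : Pt → ℝ) (p : Pt) : ℝ :=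
  etaV f ξ₁ ξ₂ ξ₃ (E 0) p * Phi2 f ξ₁ ξ₂ ξ₃ (E 1) (E 2) p
    - etaV f ξ₁ ξ₂ ξ₃ (E 1) p * Phi2 f ξ₁ ξ₂ ξ₃ (E 0) (E 2) p
    + etaV f ξ₁ ξ₂ ξ₃ (E 2) p * Phi2 f ξ₁ ξ₂ ξ₃ (E 0) (E 1) p

/-- The constant function `0`. -/
noncomputable def zeroF : Pt → ℝ := fun _ => 0
/-- The constant function `1`. -/
noncomputable def oneF : Pt → ℝ := fun _ => 1
/-- The constant function `-1`. -/
noncomputable def negOneF : Pt → ℝ := fun _ => -1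

/-- The Reeb vector field `ξ = ξ₁∂x + ∂y`. -/
noncomputable def xiVp (ξ₁ : Pt → ℝ) : VF := fun p => (ξ₁ p, (1:ℝ), (0:ℝ))


/-! For `ξ₂ ≡ 1`, `ξ₃ ≡ 0` the structure tensor factors as `F(X,Y,Z) = θ(X) (dy ∧ dz)(Y,Z)`
with the 1-form `θ = dξ₁ + ½ (f_y + ξ₁ f_x) dz` (`structForm`). Since `η(ξ) = 1` and `(dy ∧ dz)(ξ, ·) = dz`,
the `G₁₂` identity says exactly `θ = θ(ξ) η`; comparing coefficients of `dx` and `dz` gives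
`(ξ₁)_x = 0` and the stated PDE, and then `θ(ξ) = (ξ₁)_y`, so `F` vanishes nowhere iff
`(ξ₁)_y` vanishes nowhere. -/

noncomputable def structForm (f ξ₁ : Pt → ℝ) (p v : Pt) : ℝ :=
  fderiv ℝ ξ₁ p v + (1/2) * (pdy f p + ξ₁ p * pdx f p) * c3 v

def dyWedgeDz (v w : Pt) : ℝ := c2 v * c3 w - c3 v * c2 w

lemma fderiv_apply_eq_pd (g : Pt → ℝ) (p v : Pt) :
    fderiv ℝ g p v = v.1 * pdx g p + v.2.1 * pdy g p + v.2.2 * pdz g p := by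
  have hv : v = v.1 • ((1:ℝ), (0:ℝ), (0:ℝ)) + v.2.1 • ((0:ℝ), (1:ℝ), (0:ℝ))
      + v.2.2 • ((0:ℝ), (0:ℝ), (1:ℝ)) := by
    simp
  conv_lhs => rw [hv]
  simp only [map_add, map_smul, smul_eq_mul, pdx, pdy, pdz]

lemma differentiable_E (i : Fin 3) : Differentiable ℝ (E i) := by
  fin_cases i <;> exact differentiable_const _

lemma etaV_apply (f ξ₁ : Pt → ℝ) (X : VF) (p : Pt) :
    etaV f ξ₁ oneF zeroF X p = c2 (X p) + ξ₁ p * c3 (X p) := by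
  simp [etaV, oneF, zeroF]

section

variable {f ξ₁ : Pt → ℝ} {p : Pt}

lemma Ften_eq (hf : DifferentiableAt ℝ f p) (h1 : DifferentiableAt ℝ ξ₁ p)
    {X Y Z : VF} (hY : DifferentiableAt ℝ Y p) :
    Ften f ξ₁ oneF zeroF X Y Z p = structForm f ξ₁ p (X p) * dyWedgeDz (Y p) (Z p) := by
  have hY₁ := hY.fst.hasFDerivAt
  have hY₂ := hY.snd.fst.hasFDerivAt
  have hY₃ := hY.snd.snd.hasFDerivAt
  have hφY₁ :=
    (hY₁.fun_neg.fun_add (h1.hasFDerivAt.fun_mul hY₂)).fun_sub (hf.hasFDerivAt.fun_mul hY₃)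
  have hφY₂ := (h1.hasFDerivAt.fun_mul hY₃).fun_neg
  simp only [Ften, gm, cov, phiV, oneF, zeroF, c1, c2, c3, dd, Prod.fst_sub, Prod.snd_sub,
    neg_mul, one_mul, mul_one, mul_zero, zero_mul, add_zero, zero_add, neg_zero, zero_sub]
  rw [hφY₁.fderiv, hφY₂.fderiv]
  simp only [sub_apply, add_apply, neg_apply, smul_apply, smul_eq_mul]
  rw [structForm, dyWedgeDz, fderiv_apply_eq_pd f]
  simp only [c2, c3]
  ring

lemma Ften_xi_xi (hf : DifferentiableAt ℝ f p) (h1 : DifferentiableAt ℝ ξ₁ p) (Z : VF) :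
    Ften f ξ₁ oneF zeroF (xiVp ξ₁) (xiVp ξ₁) Z p =
      structForm f ξ₁ p (xiVp ξ₁ p) * c3 (Z p) := by
  rw [Ften_eq hf h1 (Y := xiVp ξ₁) (h1.prodMk (differentiableAt_const _))]
  simp [dyWedgeDz, xiVp, c2, c3]

lemma structForm_xi : structForm f ξ₁ p (xiVp ξ₁ p) = ξ₁ p * pdx ξ₁ p + pdy ξ₁ p := by
  simp [structForm, xiVp, c3, fderiv_apply_eq_pd]

lemma structForm_eq_eta_mul_iff :
    (∀ v, structForm f ξ₁ p v = (c2 v + ξ₁ p * c3 v) * structForm f ξ₁ p (xiVp ξ₁ p)) ↔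
      pdx ξ₁ p = 0 ∧
        2 * ξ₁ p * pdy ξ₁ p - 2 * pdz ξ₁ p - ξ₁ p * pdx f p - pdy f p = 0 := by
  rw [structForm_xi]
  simp only [structForm, fderiv_apply_eq_pd, c2, c3]
  constructor
  · intro h
    have hx := h (1, 0, 0)
    have hz := h (0, 0, 1)
    simp only [one_mul, zero_mul, add_zero, one_div, mul_zero, zero_add, mul_one] at hx hz
    exact ⟨hx, by linear_combination -2 * hz - 2 * ξ₁ p ^ 2 * hx⟩
  · rintro ⟨hx, hc⟩ v
    linear_combination (v.1 - ξ₁ p * v.2.1 - ξ₁ p ^ 2 * v.2.2) * hx - (1/2) * v.2.2 * hc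

lemma exists_Ften_coord_ne_zero_iff (hf : DifferentiableAt ℝ f p) (h1 : DifferentiableAt ℝ ξ₁ p)
    (hθ : ∀ v, structForm f ξ₁ p v = (c2 v + ξ₁ p * c3 v) * structForm f ξ₁ p (xiVp ξ₁ p)) :
    (∃ i j k : Fin 3, Ften f ξ₁ oneF zeroF (E i) (E j) (E k) p ≠ 0) ↔
      structForm f ξ₁ p (xiVp ξ₁ p) ≠ 0 := by
  constructor
  · rintro ⟨i, j, k, hF⟩
    rw [Ften_eq hf h1 (differentiable_E j p), hθ] at hF
    exact right_ne_zero_of_mul (left_ne_zero_of_mul hF)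
  · intro hξ
    refine ⟨1, 1, 2, ?_⟩
    rw [Ften_eq hf h1 (differentiable_E 1 p), hθ]
    simpa [E, dyWedgeDz, c2, c3] using hξ

lemma G12_identity_iff (hf : Differentiable ℝ f) (h1 : Differentiable ℝ ξ₁) :
    (∀ X Y Z : VF, ContDiff ℝ (⊤ : ℕ∞) X → ContDiff ℝ (⊤ : ℕ∞) Y →
        ContDiff ℝ (⊤ : ℕ∞) Z → ∀ p : Pt,
          Ften f ξ₁ oneF zeroF X Y Z p =
            etaV f ξ₁ oneF zeroF X p *
              (etaV f ξ₁ oneF zeroF Y p *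
                  Ften f ξ₁ oneF zeroF (xiVp ξ₁) (xiVp ξ₁) Z p -
                etaV f ξ₁ oneF zeroF Z p *
                  Ften f ξ₁ oneF zeroF (xiVp ξ₁) (xiVp ξ₁) Y p)) ↔
      ∀ p v, structForm f ξ₁ p v = (c2 v + ξ₁ p * c3 v) * structForm f ξ₁ p (xiVp ξ₁ p) := by
  simp only [Ften_xi_xi (hf _) (h1 _), etaV_apply]
  constructor
  · intro h p v
    have hv := h (fun _ => v) (fun _ => (0, 1, 0)) (fun _ => (0, 0, 1))
      contDiff_const contDiff_const contDiff_const p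
    rw [Ften_eq (hf p) (h1 p) (differentiableAt_const _)] at hv
    simpa [dyWedgeDz, c2, c3] using hv
  · intro hθ X Y Z _ hY _ p
    rw [Ften_eq (hf p) (h1 p) (hY.differentiable (by simp) p), hθ, dyWedgeDz]
    ring

end

/-- Theorem 4.4(v): the structure with `ξ₂ ≡ 1`, `ξ₃ ≡ 0` lies strictly in the class
`G₁₂` iff `(ξ₁)_x ≡ 0`, `(ξ₁)_y` vanishes nowhere and
`2ξ₁(ξ₁)_y - 2(ξ₁)_z - ξ₁ f_x - f_y ≡ 0`. -/
theorem G12_iff (f ξ₁ : Pt → ℝ)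
    (hf : ContDiff ℝ (⊤ : ℕ∞) f) (h1 : ContDiff ℝ (⊤ : ℕ∞) ξ₁) :
    ((∀ p : Pt, ∃ i j k : Fin 3, Ften f ξ₁ oneF zeroF (E i) (E j) (E k) p ≠ 0) ∧
      (∀ X Y Z : VF, ContDiff ℝ (⊤ : ℕ∞) X → ContDiff ℝ (⊤ : ℕ∞) Y →
        ContDiff ℝ (⊤ : ℕ∞) Z → ∀ p : Pt,
          Ften f ξ₁ oneF zeroF X Y Z p =
            etaV f ξ₁ oneF zeroF X p *
              (etaV f ξ₁ oneF zeroF Y p *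
                  Ften f ξ₁ oneF zeroF (xiVp ξ₁) (xiVp ξ₁) Z p -
                etaV f ξ₁ oneF zeroF Z p *
                  Ften f ξ₁ oneF zeroF (xiVp ξ₁) (xiVp ξ₁) Y p))) ↔
    ((∀ p : Pt, pdx ξ₁ p = 0) ∧ (∀ p : Pt, pdy ξ₁ p ≠ 0) ∧
      (∀ p : Pt, 2 * ξ₁ p * pdy ξ₁ p - 2 * pdz ξ₁ p - ξ₁ p * pdx f p - pdy f p = 0)) := by
  have hfd : Differentiable ℝ f := hf.differentiable (by simp)
  have h1d : Differentiable ℝ ξ₁ := h1.differentiable (by simp)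
  have hξ (p) (hx : pdx ξ₁ p = 0) : structForm f ξ₁ p (xiVp ξ₁ p) = pdy ξ₁ p := by
    rw [structForm_xi, hx, mul_zero, zero_add]
  rw [G12_identity_iff hfd h1d]
  constructor
  · rintro ⟨hF, hθ⟩
    have hx p := (structForm_eq_eta_mul_iff.mp (hθ p)).1
    refine ⟨hx, fun p => ?_, fun p => (structForm_eq_eta_mul_iff.mp (hθ p)).2⟩
    rw [← hξ p (hx p), ← exists_Ften_coord_ne_zero_iff (hfd p) (h1d p) (hθ p)]
    exact hF p
  · rintro ⟨hx, hy, hc⟩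
    have hθ p := structForm_eq_eta_mul_iff.mpr ⟨hx p, hc p⟩
    refine ⟨fun p => ?_, hθ⟩
    rw [exists_Ften_coord_ne_zero_iff (hfd p) (h1d p) (hθ p), hξ p (hx p)]
    exact hy p
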